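/- Let X = {0,1}^{d−1} × {0} ⊂ ℝ^d be the vertex set of the unit hypercube and let x₀ = (1/2, …, 1/2, c) ∈ ℝ^d with c > √(d−1)/2. Then for any two distinct vertices y, z ∈ X, the triangle x₀ y z is acute: all three angles ∠y x₀ z, ∠x₀ y z, ∠x₀ z y are strictly less than π/2. -/

import Mathlib

/-!
Every vertex `y` satisfies `(yᵢ - x₀ᵢ)² = 1/4` off the last coordinate and `= c²` on it, so all
vertices are equidistant from `x₀`: the triangles `x₀ y z` are isosceles, hence their base angles
are acute. At the apex, `⟪y - x₀, z - x₀⟫ ≥ c² - (d - 1)/4`, since each of the first `d - 1`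
coordinates contributes at least `-1/4`, and `c > √(d - 1)/2` makes this positive.
-/

open EuclideanGeometry InnerProductGeometry
open scoped RealInnerProductSpace

/-- The vertex set `{0,1}^(d-1) × {0}` of the `(d-1)`-dimensional unit hypercube
embedded in `ℝ^d` with last coordinate `0`. -/
def hypercube (d : ℕ) : Set (EuclideanSpace ℝ (Fin d)) :=
  {v | ∀ i : Fin d, if (i : ℕ) = d - 1 then v i = 0 else v i = 0 ∨ v i = 1}

theorem InnerProductGeometry.angle_lt_pi_div_two_of_inner_pos {V : Type*}
    [NormedAddCommGroup V] [InnerProductSpace ℝ V] {x y : V} (h : 0 < ⟪x, y⟫) :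
    angle x y < Real.pi / 2 := by
  have hx : x ≠ 0 := by rintro rfl; simp at h
  have hy : y ≠ 0 := by rintro rfl; simp at h
  rw [angle, Real.arccos_lt_pi_div_two]
  exact div_pos h (mul_pos (norm_pos_iff.2 hx) (norm_pos_iff.2 hy))

theorem EuclideanGeometry.angle_lt_pi_div_two_of_dist_eq {V P : Type*}
    [NormedAddCommGroup V] [InnerProductSpace ℝ V] [MetricSpace P] [NormedAddTorsor V P]
    {p₁ p₂ p₃ : P} (h : dist p₁ p₂ = dist p₁ p₃) (h₂₃ : p₂ ≠ p₃) :
    ∠ p₁ p₂ p₃ < Real.pi / 2 := by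
  apply angle_lt_pi_div_two_of_inner_pos
  -- `2 ⟪p₁ - p₂, p₃ - p₂⟫ = ‖p₃ - p₂‖²` by expanding `‖p₁ - p₃‖² = ‖p₁ - p₂‖²`.
  have hsub : p₁ -ᵥ p₃ = (p₁ -ᵥ p₂) - (p₃ -ᵥ p₂) := (vsub_sub_vsub_cancel_right _ _ _).symm
  have hnorm : ‖p₁ -ᵥ p₂‖ = ‖p₁ -ᵥ p₃‖ := by rwa [← dist_eq_norm_vsub, ← dist_eq_norm_vsub]
  have hpos : 0 < ‖p₃ -ᵥ p₂‖ := norm_pos_iff.2 (vsub_ne_zero.2 h₂₃.symm)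
  have hexpand := norm_sub_sq_real (p₁ -ᵥ p₂) (p₃ -ᵥ p₂)
  rw [← hsub, ← hnorm] at hexpand
  nlinarith

theorem EuclideanSpace.inner_vsub_vsub_eq_sum {d : ℕ} (p₁ p₂ p₃ : EuclideanSpace ℝ (Fin d)) :
    ⟪p₁ -ᵥ p₂, p₃ -ᵥ p₂⟫ = ∑ i, (p₁ i - p₂ i) * (p₃ i - p₂ i) := by
  simp [PiLp.inner_apply, mul_comm]

theorem sq_half_sub_eq_of_eq_zero_or_one {a : ℝ} (ha : a = 0 ∨ a = 1) :
    (1 / 2 - a) ^ 2 = 1 / 4 := by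
  rcases ha with rfl | rfl <;> norm_num

theorem neg_quarter_le_mul_of_eq_zero_or_one {a b : ℝ} (ha : a = 0 ∨ a = 1)
    (hb : b = 0 ∨ b = 1) : -(1 / 4) ≤ (a - 1 / 2) * (b - 1 / 2) := by
  rcases ha with rfl | rfl <;> rcases hb with rfl | rfl <;> norm_num

theorem dist_eq_of_mem_hypercube {d : ℕ} {c : ℝ} {x₀ y z : EuclideanSpace ℝ (Fin d)}
    (hx₀ : ∀ i : Fin d, x₀ i = if (i : ℕ) = d - 1 then c else 1 / 2)
    (hy : y ∈ hypercube d) (hz : z ∈ hypercube d) : dist x₀ y = dist x₀ z := by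
  rw [EuclideanSpace.dist_eq, EuclideanSpace.dist_eq]
  congr 1
  refine Finset.sum_congr rfl fun i _ => ?_
  rw [Real.dist_eq, Real.dist_eq, sq_abs, sq_abs]
  have hyi := hy i
  have hzi := hz i
  rw [hx₀ i]
  split_ifs at hyi hzi ⊢
  · rw [hyi, hzi]
  · rw [sq_half_sub_eq_of_eq_zero_or_one hyi, sq_half_sub_eq_of_eq_zero_or_one hzi]

theorem sum_mul_sub_apex_pos_of_mem_hypercube {d : ℕ} (hd : 1 ≤ d) {c : ℝ}
    (hc : (d - 1 : ℝ) < (2 * c) ^ 2) {x₀ y z : EuclideanSpace ℝ (Fin d)}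
    (hx₀ : ∀ i : Fin d, x₀ i = if (i : ℕ) = d - 1 then c else 1 / 2)
    (hy : y ∈ hypercube d) (hz : z ∈ hypercube d) :
    0 < ∑ i, (y i - x₀ i) * (z i - x₀ i) := by
  obtain ⟨n, rfl⟩ := Nat.exists_eq_add_of_le' hd
  have hlast :
      (y (Fin.last n) - x₀ (Fin.last n)) * (z (Fin.last n) - x₀ (Fin.last n)) = c ^ 2 := by
    have hyl := hy (Fin.last n)
    have hzl := hz (Fin.last n)
    simp only [Fin.val_last, Nat.add_sub_cancel, if_true] at hyl hzl
    rw [hx₀, if_pos (by simp), hyl, hzl]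
    ring
  have hrest : -(n / 4 : ℝ) ≤ ∑ i : Fin n,
      (y i.castSucc - x₀ i.castSucc) * (z i.castSucc - x₀ i.castSucc) := by
    have hterm : ∀ i : Fin n, -(1 / 4 : ℝ) ≤
        (y i.castSucc - x₀ i.castSucc) * (z i.castSucc - x₀ i.castSucc) := by
      intro i
      have hi : ((i.castSucc : Fin (n + 1)) : ℕ) ≠ n + 1 - 1 := by simp [i.isLt.ne]
      have hyi := hy i.castSucc
      have hzi := hz i.castSucc
      rw [if_neg hi] at hyi hzi
      rw [hx₀, if_neg hi]
      exact neg_quarter_le_mul_of_eq_zero_or_one hyi hzi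
    calc -(n / 4 : ℝ) = ∑ _i : Fin n, -(1 / 4 : ℝ) := by simp; ring
      _ ≤ _ := Finset.sum_le_sum fun i _ => hterm i
  rw [Fin.sum_univ_castSucc, hlast]
  push_cast at hc
  nlinarith

/-- Let `x₀ = (1/2, …, 1/2, c) ∈ ℝ^d` with `c > √(d-1)/2`.  For any two distinct
vertices `y, z` of the hypercube `X = {0,1}^(d-1) × {0}`, the triangle `x₀ y z` is
acute: all three angles `∠y x₀ z`, `∠x₀ y z` and `∠x₀ z y` are strictly less
than `π/2`. -/
theorem apex_triangle_acute (d : ℕ) (hd : 2 ≤ d) (c : ℝ)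
    (hc : Real.sqrt ((d : ℝ) - 1) / 2 < c)
    (x₀ : EuclideanSpace ℝ (Fin d))
    (hx₀ : ∀ i : Fin d, x₀ i = if (i : ℕ) = d - 1 then c else 1 / 2) :
    ∀ y ∈ hypercube d, ∀ z ∈ hypercube d, y ≠ z →
      EuclideanGeometry.angle y x₀ z < Real.pi / 2 ∧
      EuclideanGeometry.angle x₀ y z < Real.pi / 2 ∧
      EuclideanGeometry.angle x₀ z y < Real.pi / 2 := by
  intro y hy z hz hyz
  have hc' : (d - 1 : ℝ) < (2 * c) ^ 2 :=
    (Real.sqrt_lt' (by linarith [Real.sqrt_nonneg ((d : ℝ) - 1)])).1 (by linarith)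
  refine ⟨?_, angle_lt_pi_div_two_of_dist_eq (dist_eq_of_mem_hypercube hx₀ hy hz) hyz,
    angle_lt_pi_div_two_of_dist_eq (dist_eq_of_mem_hypercube hx₀ hz hy) hyz.symm⟩
  apply angle_lt_pi_div_two_of_inner_pos
  rw [EuclideanSpace.inner_vsub_vsub_eq_sum]
  exact sum_mul_sub_apex_pos_of_mem_hypercube (by omega) hc' hx₀ hy hz
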